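/- arXiv:1202.0681 — 2 statements merged into one kernel-verified Lean document; each statement's English description precedes it below -/
import Mathlib

section
/- For every integer r ≥ 2, there exists a finite bipartite simple graph G with bipartition (U, V) such that every vertex of U has degree 2r, every vertex of V has degree 2r−1, G has no perfect matching, and for every maximum matching M of G, any two distinct M-unsaturated vertices have a common neighbor. -/
/-- A matching `M` of `G` is maximum if no matching of `G` has more edges. -/
def SimpleGraph.IsMaximumMatching {α : Type*} (G : SimpleGraph α) (M : G.Subgraph) : Prop :=
  M.IsMatching ∧ ∀ M' : G.Subgraph, M'.IsMatching → M'.edgeSet.ncard ≤ M.edgeSet.ncard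

/-- For every `r ≥ 2` there is a finite bipartite simple graph with bipartition `(U, W)`,
every vertex of `U` of degree `2r`, every vertex of `W` of degree `2r - 1`, with no
perfect matching, such that for every maximum matching `M`, any two distinct
`M`-unsaturated vertices have a common neighbor. -/
theorem stmt_2 (r : ℕ) (hr : 2 ≤ r) :
    ∃ (α : Type) (_ : Fintype α) (G : SimpleGraph α) (U W : Set α),
      U ∪ W = Set.univ ∧ Disjoint U W ∧
      (∀ a b, G.Adj a b → (a ∈ U ∧ b ∈ W) ∨ (a ∈ W ∧ b ∈ U)) ∧
      (∀ u ∈ U, (G.neighborSet u).ncard = 2 * r) ∧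
      (∀ v ∈ W, (G.neighborSet v).ncard = 2 * r - 1) ∧
      (¬ ∃ M : G.Subgraph, M.IsPerfectMatching) ∧
      (∀ M : G.Subgraph, G.IsMaximumMatching M →
        ∀ a b, a ≠ b → (∀ c, ¬ M.Adj a c) → (∀ c, ¬ M.Adj b c) →
          ∃ w, G.Adj w a ∧ G.Adj w b) := by
  classical
  set G := completeBipartiteGraph (Fin (2 * r - 1)) (Fin (2 * r)) with hG
  refine ⟨Fin (2 * r - 1) ⊕ Fin (2 * r), inferInstance, G,
    Set.range Sum.inl, Set.range Sum.inr, ?_, ?_, ?_, ?_, ?_, ?_, ?_⟩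
  · exact Set.range_inl_union_range_inr
  · exact Set.isCompl_range_inl_range_inr.disjoint
  · rintro (a | a) (b | b) hab <;> simp_all [hG, completeBipartiteGraph]
  · rintro u ⟨x, rfl⟩
    have : G.neighborSet (Sum.inl x) = Set.range Sum.inr := by
      ext (b | b) <;> simp [hG, SimpleGraph.neighborSet, completeBipartiteGraph]
    rw [this, ← Nat.card_coe_set_eq, Nat.card_range_of_injective Sum.inr_injective]
    simp
  · rintro v ⟨x, rfl⟩
    have : G.neighborSet (Sum.inr x) = Set.range Sum.inl := by
      ext (b | b) <;> simp [hG, SimpleGraph.neighborSet, completeBipartiteGraph]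
    rw [this, ← Nat.card_coe_set_eq, Nat.card_range_of_injective Sum.inl_injective]
    simp
  · rintro ⟨M, hM⟩
    have heven := hM.even_card
    rw [Fintype.card_sum, Fintype.card_fin, Fintype.card_fin] at heven
    have : 2 * r - 1 + 2 * r = 2 * (2 * r - 1) + 1 := by omega
    rw [this] at heven
    simp [Nat.even_add_one, Nat.even_iff] at heven
  · rintro M ⟨hMm, hMmax⟩ a b hab ha hb
    have hkey : ∀ (u : Fin (2 * r - 1)) (v : Fin (2 * r)),
        (∀ c, ¬ M.Adj (Sum.inl u) c) → (∀ c, ¬ M.Adj (Sum.inr v) c) → False := by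
      intro u v hu hv
      have hadj : G.Adj (Sum.inl u) (Sum.inr v) := by simp [hG, completeBipartiteGraph]
      set M' := M ⊔ G.subgraphOfAdj hadj with hM'
      have hdisj : Disjoint M.support (G.subgraphOfAdj hadj).support := by
        rw [Set.disjoint_right]
        rintro x hx hxM
        obtain ⟨c, hc⟩ := hxM
        have := SimpleGraph.support_subgraphOfAdj hadj ▸ hx
        rcases this with rfl | rfl
        · exact hu c hc
        · exact hv c hc
      have hM'm : M'.IsMatching := hMm.sup (SimpleGraph.Subgraph.IsMatching.subgraphOfAdj hadj) hdisj
      have hedge : M'.edgeSet = insert s(Sum.inl u, Sum.inr v) M.edgeSet := by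
        rw [hM', SimpleGraph.Subgraph.edgeSet_sup, SimpleGraph.edgeSet_subgraphOfAdj]
        rw [Set.union_singleton]
      have hnotmem : s(Sum.inl u, Sum.inr v) ∉ M.edgeSet := by
        intro h
        exact hu (Sum.inr v) (SimpleGraph.Subgraph.mem_edgeSet.mp h)
      have hfin : M.edgeSet.Finite := Set.toFinite _
      have hlt : M.edgeSet.ncard < M'.edgeSet.ncard := by
        rw [hedge, Set.ncard_insert_of_notMem hnotmem hfin]
        omega
      exact absurd (hMmax M' hM'm) (by omega)
    rcases a with u | v <;> rcases b with u' | v'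
    · have : (0 : ℕ) < 2 * r := by omega
      exact ⟨Sum.inr ⟨0, this⟩, by simp [hG, completeBipartiteGraph],
        by simp [hG, completeBipartiteGraph]⟩
    · exact absurd (hkey u v' ha hb) (fun h => h)
    · exact absurd (hkey u' v hb ha) (fun h => h)
    · have : (0 : ℕ) < 2 * r - 1 := by omega
      exact ⟨Sum.inl ⟨0, this⟩, by simp [hG, completeBipartiteGraph],
        by simp [hG, completeBipartiteGraph]⟩
end

section
/- For every integer r ≥ 2, every maximum matching M of the graph B_{2r,2r−1} saturates all vertices of U; consequently every maximum matching of B_{2r,2r−1} has exactly 2r² − r edges and leaves exactly r vertices of V unsaturated. -/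
/-- The bipartite graph `B_{2r,2r-1}`: the left part `U` consists of the vertices
`u_{(i,j)}` for `i < j` (encoded as `Sum.inl ⟨(i, j), hij⟩`), the right part `V` consists
of the vertices `v_k^{(i)}` (encoded as `Sum.inr (i, k)`), and `u_{(i,j)}` is joined
to `v_k^{(i)}` and `v_k^{(j)}` for all `k`. -/
def BGraph (r : ℕ) :
    SimpleGraph ({p : Fin (2 * r) × Fin (2 * r) // p.1 < p.2} ⊕ Fin (2 * r) × Fin r) where
  Adj a b :=
    match a, b with
    | .inl u, .inr v => v.1 = u.1.1 ∨ v.1 = u.1.2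
    | .inr v, .inl u => v.1 = u.1.1 ∨ v.1 = u.1.2
    | _, _ => False
  symm := by constructor; rintro (u | v) (u' | v') h <;> exact h
  loopless := by constructor; rintro (u | v) h <;> exact h

/-!
Every edge of a matching of `B_{2r,2r-1}` has exactly one endpoint in `U`, so a matching has as
many edges as it saturates vertices of `U`, and as many as it saturates vertices of `V`. Sending
`u_{(i,j)}` to a suitable `v_k^{(i)}` or `v_k^{(j)}` injects `U` into `V` along edges, so some
matching saturates `U`; hence a maximum matching has `|U| = C(2r, 2) = 2r² - r` edges, saturates
all of `U`, and saturates `2r² - r` of the `2r²` vertices of `V`.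
-/

open Function Set

namespace SimpleGraph

variable {V : Type*} {G : SimpleGraph V} {M : G.Subgraph}

theorem Subgraph.IsMatching.ncard_edgeSet_eq_ncard_inter_support {s t : Set V}
    (hM : M.IsMatching) (hG : G.IsBipartiteWith s t) :
    M.edgeSet.ncard = (s ∩ M.support).ncard := by
  have not_adj {v w : V} (hv : v ∈ s) (hw : w ∈ s) : ¬M.Adj v w := fun h => by
    rcases hG.mem_of_adj (M.adj_sub h) with ⟨-, hw'⟩ | ⟨hv', -⟩
    · exact hG.disjoint.notMem_of_mem_left hw hw'
    · exact hG.disjoint.notMem_of_mem_left hv hv'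
  choose partner hpartner using fun v (hv : v ∈ s ∩ M.support) => M.mem_support.1 hv.2
  symm
  refine ncard_congr (fun v hv => s(v, partner v hv)) (fun v hv => hpartner v hv) ?_ ?_
  · intro v w hv hw h
    rcases Sym2.eq_iff.1 h with ⟨rfl, -⟩ | ⟨rfl, hw'⟩
    · rfl
    · exact (not_adj hw.1 hv.1 (by simpa [hw'] using hpartner w hw)).elim
  · intro e he
    induction e using Sym2.ind with | _ x y => ?_
    have hxy : M.Adj x y := he
    rcases hG.mem_of_adj (M.adj_sub hxy) with ⟨hx, -⟩ | ⟨-, hy⟩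
    · have hx' : x ∈ s ∩ M.support := ⟨hx, M.mem_support.2 ⟨y, hxy⟩⟩
      exact ⟨x, hx', by rw [hM.eq_of_adj_left (hpartner x hx') hxy]⟩
    · have hy' : y ∈ s ∩ M.support := ⟨hy, M.mem_support.2 ⟨x, hxy.symm⟩⟩
      exact ⟨y, hy', by rw [hM.eq_of_adj_left (hpartner y hy') hxy.symm, Sym2.eq_swap]⟩

theorem Subgraph.IsMatching.ncard_edgeSet_eq_ncard_preimage_support {W : Type*} {f : W → V}
    {t : Set V} (hf : Injective f) (hM : M.IsMatching) (hG : G.IsBipartiteWith (range f) t) :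
    M.edgeSet.ncard = (f ⁻¹' M.support).ncard := by
  rw [hM.ncard_edgeSet_eq_ncard_inter_support hG, ← image_preimage_eq_range_inter,
    ncard_image_of_injective _ hf]

theorem IsMaximumMatching.preimage_support_eq_univ {W : Type*} [Finite W] {f : W → V}
    {t : Set V} (hf : Injective f) (hG : G.IsBipartiteWith (range f) t) {M₀ : G.Subgraph}
    (hM₀ : M₀.IsMatching) (hM₀f : range f ⊆ M₀.support) (hM : G.IsMaximumMatching M) :
    f ⁻¹' M.support = univ := by
  refine (eq_univ_iff_ncard _).2 <| le_antisymm (ncard_le_card _) ?_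
  calc Nat.card W = (f ⁻¹' M₀.support).ncard := by
        rw [preimage_eq_univ_iff.2 hM₀f, ncard_univ]
    _ = M₀.edgeSet.ncard := (hM₀.ncard_edgeSet_eq_ncard_preimage_support hf hG).symm
    _ ≤ M.edgeSet.ncard := hM.2 M₀ hM₀
    _ = (f ⁻¹' M.support).ncard := hM.1.ncard_edgeSet_eq_ncard_preimage_support hf hG

theorem exists_isMatching_range_inl_subset_support {α β : Type*} {G : SimpleGraph (α ⊕ β)}
    {f : α → β} (hf : Injective f) (hadj : ∀ a, G.Adj (.inl a) (.inr (f a))) :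
    ∃ M : G.Subgraph, M.IsMatching ∧ range Sum.inl ⊆ M.support := by
  have hdisj : Disjoint (range (Sum.inl : α → α ⊕ β)) (range (Sum.inr ∘ f)) :=
    isCompl_range_inl_range_inr.disjoint.mono_right (range_comp_subset_range _ _)
  obtain ⟨M, hMverts, hM⟩ := Subgraph.IsMatching.exists_of_disjoint_sets_of_equiv hdisj
    ((Equiv.ofInjective _ Sum.inl_injective).symm.trans
      (Equiv.ofInjective _ (Sum.inr_injective.comp hf))) (by
      rintro ⟨_, a, rfl⟩
      simpa [Equiv.apply_ofInjective_symm Sum.inl_injective] using hadj a)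
  exact ⟨M, hM, by rw [hM.support_eq_verts, hMverts]; exact subset_union_left⟩

end SimpleGraph

namespace BGraph

theorem isBipartiteWith (r : ℕ) : (BGraph r).IsBipartiteWith (range Sum.inl) (range Sum.inr) where
  disjoint := isCompl_range_inl_range_inr.disjoint
  mem_of_adj := by rintro (u | v) (u' | v') h <;> simp_all [BGraph]

theorem card_left (r : ℕ) :
    Nat.card {p : Fin (2 * r) × Fin (2 * r) // p.1 < p.2} = 2 * r ^ 2 - r := by
  rw [Nat.card_eq_fintype_card, Fintype.card_subtype, Fintype.card_product_filter_lt,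
    Fintype.card_fin, Nat.choose_two_right, mul_assoc, Nat.mul_div_cancel_left _ two_pos,
    Nat.mul_sub_one]
  ring_nf

theorem card_right (r : ℕ) : Nat.card (Fin (2 * r) × Fin r) = 2 * r ^ 2 := by
  rw [Nat.card_prod, Nat.card_eq_fintype_card, Fintype.card_fin, Nat.card_eq_fintype_card,
    Fintype.card_fin]
  ring

-- On `ℤ/2r`, `u_{(i,j)}` goes to the endpoint from which the other one lies at forward distance
-- `δ ≤ r`, with index `δ - 1`; that endpoint and `δ` recover the pair.
def label {r : ℕ} (u : {p : Fin (2 * r) × Fin (2 * r) // p.1 < p.2}) : Fin (2 * r) × Fin r :=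
  have hij : (u.1.1 : ℕ) < u.1.2 := u.2
  have hj : (u.1.2 : ℕ) < 2 * r := u.1.2.isLt
  if h : (u.1.2 : ℕ) - u.1.1 ≤ r then (u.1.1, ⟨u.1.2 - u.1.1 - 1, by omega⟩)
  else (u.1.2, ⟨2 * r - 1 - (u.1.2 - u.1.1), by omega⟩)

theorem adj_label {r : ℕ} (u : {p : Fin (2 * r) × Fin (2 * r) // p.1 < p.2}) :
    (BGraph r).Adj (.inl u) (.inr (label u)) := by
  change (label u).1 = u.1.1 ∨ (label u).1 = u.1.2
  unfold label
  split_ifs <;> simp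

theorem label_injective (r : ℕ) :
    Injective (label : {p : Fin (2 * r) × Fin (2 * r) // p.1 < p.2} → Fin (2 * r) × Fin r) := by
  rintro ⟨⟨⟨i, hi⟩, ⟨j, hj⟩⟩, hij⟩ ⟨⟨⟨i', hi'⟩, ⟨j', hj'⟩⟩, hij'⟩ h
  simp only [Fin.mk_lt_mk] at hij hij'
  simp only [label] at h
  split_ifs at h <;> simp only [Prod.mk.injEq, Fin.mk.injEq] at h <;> ext <;> simp <;> omega

end BGraph

theorem stmt_4_general (r : ℕ) (M : (BGraph r).Subgraph)
    (hM : (BGraph r).IsMaximumMatching M) :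
    (∀ u : {p : Fin (2 * r) × Fin (2 * r) // p.1 < p.2}, ∃ b, M.Adj (Sum.inl u) b) ∧
    M.edgeSet.ncard = 2 * r ^ 2 - r ∧
    {v : Fin (2 * r) × Fin r | ∀ b, ¬ M.Adj (Sum.inr v) b}.ncard = r := by
  obtain ⟨M₀, hM₀, hM₀U⟩ :=
    SimpleGraph.exists_isMatching_range_inl_subset_support (BGraph.label_injective r)
      BGraph.adj_label
  have hU := hM.preimage_support_eq_univ Sum.inl_injective (BGraph.isBipartiteWith r) hM₀ hM₀U
  have hcard : M.edgeSet.ncard = 2 * r ^ 2 - r := by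
    rw [hM.1.ncard_edgeSet_eq_ncard_preimage_support Sum.inl_injective (BGraph.isBipartiteWith r),
      hU, ncard_univ, BGraph.card_left]
  refine ⟨fun u => M.mem_support.1 (eq_univ_iff_forall.1 hU u), hcard, ?_⟩
  have hV := hM.1.ncard_edgeSet_eq_ncard_preimage_support Sum.inr_injective
    (BGraph.isBipartiteWith r).symm
  have hunsat : {v : Fin (2 * r) × Fin r | ∀ b, ¬ M.Adj (Sum.inr v) b} =
      (Sum.inr ⁻¹' M.support)ᶜ := by
    ext v
    simp [SimpleGraph.Subgraph.mem_support]
  rw [hunsat]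
  refine ncard_compl_of_ncard_eq_add _ ?_
  rw [← hV, hcard, BGraph.card_right]
  have : r ≤ 2 * r ^ 2 := by nlinarith
  omega

/-- Every maximum matching of `B_{2r,2r-1}` saturates all vertices of `U`, has exactly
`2r² - r` edges, and leaves exactly `r` vertices of `V` unsaturated. -/
theorem stmt_4 (r : ℕ) (hr : 2 ≤ r) (M : (BGraph r).Subgraph)
    (hM : (BGraph r).IsMaximumMatching M) :
    (∀ u : {p : Fin (2 * r) × Fin (2 * r) // p.1 < p.2}, ∃ b, M.Adj (Sum.inl u) b) ∧
    M.edgeSet.ncard = 2 * r ^ 2 - r ∧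
    {v : Fin (2 * r) × Fin r | ∀ b, ¬ M.Adj (Sum.inr v) b}.ncard = r :=
  stmt_4_general r M hM
end
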